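/- Lower semicontinuity of entropy on countable alphabets: if probability distributions P_m on a countable set converge in total variation to P, then liminf_{m→∞} H(P_m) ≥ H(P). -/

import Mathlib

def IsPMF {α : Type*} (p : α → ℝ) : Prop := (∀ a, 0 ≤ p a) ∧ ∑' a, p a = 1

/-- Shannon entropy in bits, valued in `ℝ≥0∞`. -/
noncomputable def Hen {α : Type*} (p : α → ℝ) : ENNReal :=
  ∑' a, ENNReal.ofReal (-(p a * Real.logb 2 (p a)))

/-!
Entropy is a sum over the alphabet of terms `-x logb 2 x` (truncated at `0`), each continuous
in one coordinate. An `ℝ≥0∞`-valued sum of continuous functions is a supremum of continuous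
finite partial sums, hence lower semicontinuous for the topology of pointwise convergence.
Convergence in total variation implies pointwise convergence, so the liminf inequality follows.
-/

open Filter Topology

theorem IsPMF.summable {α : Type*} {p : α → ℝ} (hp : IsPMF p) : Summable p := by
  by_contra h
  simpa [tsum_eq_zero_of_not_summable h] using hp.2

theorem Real.continuous_mul_logb (b : ℝ) : Continuous fun x => x * Real.logb b x := by
  simpa only [Real.logb, mul_div_assoc] using Real.continuous_mul_log.div_const (Real.log b)

theorem lowerSemicontinuous_Hen {α : Type*} : LowerSemicontinuous (Hen : (α → ℝ) → ENNReal) :=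
  lowerSemicontinuous_tsum fun a =>
    (ENNReal.continuous_ofReal.comp
      ((Real.continuous_mul_logb 2).comp (continuous_apply a)).neg).lowerSemicontinuous

theorem tendsto_pi_nhds_of_tendsto_tsum_abs_sub {ι α : Type*} {l : Filter ι} {f : ι → α → ℝ}
    {g : α → ℝ} (hf : ∀ i, Summable fun a => |f i a - g a|)
    (h : Tendsto (fun i => ∑' a, |f i a - g a|) l (𝓝 0)) : Tendsto f l (𝓝 g) := by
  refine tendsto_pi_nhds.2 fun a => tendsto_iff_dist_tendsto_zero.2 ?_
  refine squeeze_zero (fun _ => dist_nonneg) (fun i => ?_) h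
  rw [Real.dist_eq]
  exact (hf i).le_tsum a fun b _ => abs_nonneg _

theorem entropy_lower_semicontinuous_general
    {α : Type*}
    (pm : ℕ → α → ℝ) (p : α → ℝ)
    (hpm : ∀ m, IsPMF (pm m)) (hp : IsPMF p)
    (hV : Filter.Tendsto (fun m => ∑' a, |pm m a - p a|) Filter.atTop (nhds 0)) :
    Hen p ≤ Filter.liminf (fun m => Hen (pm m)) Filter.atTop := by
  have hconv : Tendsto pm atTop (𝓝 p) :=
    tendsto_pi_nhds_of_tendsto_tsum_abs_sub
      (fun m => ((hpm m).summable.sub hp.summable).abs) hV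
  exact (lowerSemicontinuous_Hen.le_liminf p).trans hconv.liminf_le_liminf_comp

theorem entropy_lower_semicontinuous
    {α : Type*} [Countable α]
    (pm : ℕ → α → ℝ) (p : α → ℝ)
    (hpm : ∀ m, IsPMF (pm m)) (hp : IsPMF p)
    (hV : Filter.Tendsto (fun m => ∑' a, |pm m a - p a|) Filter.atTop (nhds 0)) :
    Hen p ≤ Filter.liminf (fun m => Hen (pm m)) Filter.atTop :=
  entropy_lower_semicontinuous_general pm p hpm hp hV
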